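/- arXiv:1904.12594 — 2 statements merged into one kernel-verified Lean document; each statement's English description precedes it below -/
import Mathlib

section
/- A strict Gelfand–Tsetlin pattern of rank r is a triangular array (a_{i,j}), 1 ≤ i ≤ r, 1 ≤ j ≤ r−i+1, of non-negative integers with each row strictly decreasing and satisfying the interlacing condition a_{i,j} ≥ a_{i+1,j} ≥ a_{i,j+1}. Suppose the top row is a_{1,j} = r − j for 1 ≤ j ≤ r, and define d_i = Σ_{j=1}^{r−i+1} (a_{i,j} − (r−i−j+1)). Fix n ≥ 1 and a composition r = r₁ + ⋯ + r_k with r_l ≤ n for all l. If d_i ≡ 0 (mod n) for all i, and d_{e_l + 1} = 0 for all l (where e_l = r₁ + ⋯ + r_{l−1}), then d_i = 0 for every i, i.e., the pattern is the minimal pattern a_{i,j} = r − i − j + 1. -/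
/-- The weight `d_i = Σ_{j=1}^{r−i+1} (a_{i,j} − (r−i−j+1))` of row `i` of a triangular
array `a` of rank `r`. -/
def gtWeight (r : ℕ) (a : ℕ → ℕ → ℕ) (i : ℕ) : ℤ :=
  ∑ j ∈ Finset.Icc 1 (r - i + 1), ((a i j : ℤ) - ((r : ℤ) - i - j + 1))

namespace GTAux

variable (r : ℕ) (a : ℕ → ℕ → ℕ)

def eps (i j : ℕ) : ℤ := (a i j : ℤ) - ((r : ℤ) - i - j + 1)

lemma gtWeight_eq (i : ℕ) :
    gtWeight r a i = ∑ j ∈ Finset.Icc 1 (r - i + 1), eps r a i j := rfl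

variable (hdec : ∀ i j, 1 ≤ i → i ≤ r → 1 ≤ j → j + 1 ≤ r - i + 1 → a i (j + 1) < a i j)

include hdec in
lemma low (i : ℕ) (h1 : 1 ≤ i) (h2 : i ≤ r) :
    ∀ j, 1 ≤ j → j ≤ r - i + 1 → r - i + 1 ≤ a i j + j := by
  suffices h : ∀ d j, r - i + 1 - j ≤ d → 1 ≤ j → j ≤ r - i + 1 → r - i + 1 ≤ a i j + j by
    intro j hj1 hj2; exact h _ j le_rfl hj1 hj2
  intro d
  induction d with
  | zero => intro j hd h1j h2j; omega
  | succ d ih =>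
    intro j hd h1j h2j
    rcases eq_or_lt_of_le h2j with h | h
    · omega
    · have hj1 : j + 1 ≤ r - i + 1 := h
      have h3 := hdec i j h1 h2 h1j hj1
      have h4 := ih (j+1) (by omega) (by omega) hj1
      omega

include hdec in
lemma eps_nonneg (i j : ℕ) (h1 : 1 ≤ i) (h2 : i ≤ r) (hj1 : 1 ≤ j) (hj2 : j ≤ r - i + 1) :
    0 ≤ eps r a i j := by
  have := low r a hdec i h1 h2 j hj1 hj2
  unfold eps
  omega

include hdec in
lemma weight_nonneg (i : ℕ) (h1 : 1 ≤ i) (h2 : i ≤ r) : 0 ≤ gtWeight r a i := by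
  rw [gtWeight_eq]
  refine Finset.sum_nonneg ?_
  intro j hj
  rw [Finset.mem_Icc] at hj
  exact eps_nonneg r a hdec i j h1 h2 hj.1 hj.2

include hdec in
lemma eps_eq_zero (i : ℕ) (h1 : 1 ≤ i) (h2 : i ≤ r) (hw : gtWeight r a i = 0) :
    ∀ j, 1 ≤ j → j ≤ r - i + 1 → eps r a i j = 0 := by
  intro j hj1 hj2
  rw [gtWeight_eq] at hw
  have := (Finset.sum_eq_zero_iff_of_nonneg (fun j hj => by
    rw [Finset.mem_Icc] at hj
    exact eps_nonneg r a hdec i j h1 h2 hj.1 hj.2)).1 hw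
  exact this j (Finset.mem_Icc.2 ⟨hj1, hj2⟩)

include hdec in
lemma eps_anti (i : ℕ) (h1 : 1 ≤ i) (h2 : i ≤ r) (j1 j2 : ℕ) (hj1 : 1 ≤ j1) (h12 : j1 ≤ j2) :
    j2 ≤ r - i + 1 → eps r a i j2 ≤ eps r a i j1 := by
  induction j2, h12 using Nat.le_induction with
  | base => intro _; exact le_rfl
  | succ j2 hle ih =>
    intro hb
    have step : eps r a i (j2+1) ≤ eps r a i j2 := by
      have := hdec i j2 h1 h2 (by omega) (by omega)
      unfold eps
      push_cast
      omega
    exact le_trans step (ih (by omega))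

variable (hinterlace : ∀ i j, 1 ≤ i → i + 1 ≤ r → 1 ≤ j → j ≤ r - i →
      a (i + 1) j ≤ a i j ∧ a i (j + 1) ≤ a (i + 1) j)

include hinterlace in
lemma eps_step_le (i j : ℕ) (h1 : 1 ≤ i) (h2 : i + 1 ≤ r) (hj1 : 1 ≤ j) (hj2 : j ≤ r - i) :
    eps r a (i+1) j ≤ eps r a i j + 1 := by
  have := (hinterlace i j h1 h2 hj1 hj2).1
  unfold eps
  push_cast
  omega

include hinterlace in
lemma eps_diag (i j : ℕ) (h1 : 1 ≤ i) (h2 : i + 1 ≤ r) (hj1 : 1 ≤ j) (hj2 : j ≤ r - i) :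
    eps r a i (j+1) ≤ eps r a (i+1) j := by
  have := (hinterlace i j h1 h2 hj1 hj2).2
  unfold eps
  push_cast
  omega

include hinterlace in
lemma chain : ∀ t s' p, 1 ≤ s' → s' + t ≤ r → p = t + 1 → p ≤ r - s' + 1 →
    1 ≤ eps r a s' p → 1 ≤ eps r a (s' + t) 1 := by
  intro t
  induction t with
  | zero => intro s' p h1 h2 hp hpr he; subst hp; simpa using he
  | succ t ih =>
    intro s' p h1 h2 hp hpr he
    subst hp
    have hstep : 1 ≤ eps r a (s'+1) (t+1) := by
      refine le_trans ?_ (eps_diag r a hinterlace s' (t+1) h1 (by omega) (by omega) (by omega))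
      exact he
    have := ih (s'+1) (t+1) (by omega) (by omega) rfl (by omega) hstep
    have heq : s' + (t+1) = (s'+1) + t := by omega
    rw [heq]
    exact this

include hdec hinterlace in
lemma boundA (s : ℕ) (h1 : 1 ≤ s) (h2 : s + 1 ≤ r) (hs : gtWeight r a s = 0) :
    gtWeight r a (s+1) ≤ ((r - s : ℕ) : ℤ) := by
  rw [gtWeight_eq]
  have hL : r - (s+1) + 1 = r - s := by omega
  rw [hL]
  calc ∑ j ∈ Finset.Icc 1 (r-s), eps r a (s+1) j
      ≤ ∑ j ∈ Finset.Icc 1 (r-s), (1:ℤ) := by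
        refine Finset.sum_le_sum ?_
        intro j hj
        rw [Finset.mem_Icc] at hj
        have hz := eps_eq_zero r a hdec s h1 (by omega) hs j hj.1 (by omega)
        have := eps_step_le r a hinterlace s j h1 h2 hj.1 hj.2
        omega
    _ = ((r - s : ℕ) : ℤ) := by
        rw [Finset.sum_const, Nat.card_Icc]
        simp

include hdec hinterlace in
lemma boundB (s u : ℕ) (h1 : 1 ≤ s) (h2 : s + 1 ≤ u) (h3 : u ≤ r)
    (hs : gtWeight r a s = 0) (hu : gtWeight r a u = 0) :
    gtWeight r a (s+1) ≤ ((u - s - 1 : ℕ) : ℤ) := by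
  by_contra hgt
  push_neg at hgt
  set p : ℕ := u - s with hpdef
  have hp1 : 1 ≤ p := by omega
  have hpr : p ≤ r - s := by omega
  have hge : (p : ℤ) ≤ gtWeight r a (s+1) := by
    have : ((u - s - 1 : ℕ) : ℤ) + 1 ≤ gtWeight r a (s+1) := by omega
    have hc : ((u - s - 1 : ℕ) : ℤ) + 1 = (p : ℤ) := by omega
    omega
  -- first: eps (s+1) p ≥ 1
  have heps : 1 ≤ eps r a (s+1) p := by
    by_contra hle
    push_neg at hle
    have hle0 : eps r a (s+1) p ≤ 0 := by omega
    have hsplit : gtWeight r a (s+1) ≤ ((p - 1 : ℕ) : ℤ) := by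
      rw [gtWeight_eq]
      have hL : r - (s+1) + 1 = r - s := by omega
      rw [hL]
      have hIcc : Finset.Icc 1 (r-s) = Finset.Ioc 0 (r-s) := by
        ext x; simp [Finset.mem_Icc, Finset.mem_Ioc]; omega
      rw [hIcc]
      rw [← Finset.sum_Ioc_consecutive _ (by omega : (0:ℕ) ≤ p - 1) (by omega : p - 1 ≤ r - s)]
      have hA : ∑ j ∈ Finset.Ioc 0 (p-1), eps r a (s+1) j ≤ ((p-1 : ℕ) : ℤ) := by
        calc ∑ j ∈ Finset.Ioc 0 (p-1), eps r a (s+1) j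
            ≤ ∑ j ∈ Finset.Ioc 0 (p-1), (1:ℤ) := by
              refine Finset.sum_le_sum ?_
              intro j hj
              rw [Finset.mem_Ioc] at hj
              have hz := eps_eq_zero r a hdec s h1 (by omega) hs j (by omega) (by omega)
              have := eps_step_le r a hinterlace s j h1 (by omega) (by omega) (by omega)
              omega
          _ = ((p - 1 : ℕ) : ℤ) := by rw [Finset.sum_const, Nat.card_Ioc]; simp
      have hB : ∑ j ∈ Finset.Ioc (p-1) (r-s), eps r a (s+1) j ≤ 0 := by
        refine Finset.sum_nonpos ?_
        intro j hj
        rw [Finset.mem_Ioc] at hj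
        have := eps_anti r a hdec (s+1) (by omega) (by omega) p j (by omega) (by omega) (by omega)
        omega
      omega
    omega
  -- propagate down to row u
  have hchain := chain r a hinterlace (p-1) (s+1) p (by omega) (by omega) (by omega) (by omega) heps
  have huu : (s+1) + (p-1) = u := by omega
  rw [huu] at hchain
  have := eps_eq_zero r a hdec u (by omega) h3 hu 1 le_rfl (by omega)
  omega

end GTAux

/-- for a strict Gelfand–Tsetlin pattern of rank `r` with top row
`a_{1,j} = r − j`, a composition `r = r₁ + ⋯ + r_k` with all parts `≤ n`
(0-indexed parts `rr 0, …, rr (k-1)`, partial sums `e_l = rr 0 + ⋯ + rr (l-1)`):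
if `n ∣ d_i` for all `i` and `d_{e_l + 1} = 0` for all `l`, then `d_i = 0` for all `i`,
i.e. the pattern is the minimal one. -/
theorem gt_pattern_minimal (r n k : ℕ) (hn : 1 ≤ n) (rr : ℕ → ℕ)
    (hrr : ∀ l, l < k → 1 ≤ rr l ∧ rr l ≤ n)
    (hsum : ∑ l ∈ Finset.range k, rr l = r)
    (a : ℕ → ℕ → ℕ)
    (htop : ∀ j, 1 ≤ j → j ≤ r → (a 1 j : ℤ) = (r : ℤ) - j)
    (hdec : ∀ i j, 1 ≤ i → i ≤ r → 1 ≤ j → j + 1 ≤ r - i + 1 → a i (j + 1) < a i j)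
    (hinterlace : ∀ i j, 1 ≤ i → i + 1 ≤ r → 1 ≤ j → j ≤ r - i →
      a (i + 1) j ≤ a i j ∧ a i (j + 1) ≤ a (i + 1) j)
    (hmod : ∀ i, 1 ≤ i → i ≤ r → (n : ℤ) ∣ gtWeight r a i)
    (hzero : ∀ l, l < k → gtWeight r a ((∑ m ∈ Finset.range l, rr m) + 1) = 0) :
    ∀ i, 1 ≤ i → i ≤ r → gtWeight r a i = 0 := by
  set e : ℕ → ℕ := fun l => ∑ m ∈ Finset.range l, rr m with hedef
  have he0 : e 0 = 0 := by simp [hedef]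
  have hek : e k = r := hsum
  have hesucc : ∀ l, e (l+1) = e l + rr l := fun l => Finset.sum_range_succ rr l
  have hemono : ∀ l, l ≤ k → e l ≤ r := by
    intro l hl
    rw [← hek]
    exact Finset.sum_le_sum_of_subset (Finset.range_subset_range.2 hl)
  intro i hi1 hi2
  -- find the block containing i
  classical
  set P : ℕ → Prop := fun l => e l < i with hPdef
  have hP0 : P 0 := by simp [hPdef, he0]; omega
  set l : ℕ := Nat.findGreatest P k with hldef
  have hPl : P l := Nat.findGreatest_spec (Nat.zero_le k) hP0
  have hlk : l ≤ k := Nat.findGreatest_le k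
  have hlltk : l < k := by
    rcases eq_or_lt_of_le hlk with h | h
    · exfalso; rw [h] at hPl; simp only [hPdef] at hPl; omega
    · exact h
  have hnot : ¬ P (l+1) := by
    by_cases hc : l + 1 ≤ k
    · exact Nat.findGreatest_is_greatest (by omega) hc
    · have : l + 1 = k + 1 := by omega
      intro hP
      simp only [hPdef] at hP
      have : e (l+1) ≥ i := by
        have := hemono k le_rfl
        rw [‹l+1 = k+1›, hesucc k] at hP ⊢
        omega
      omega
  simp only [hPdef] at hPl hnot
  push_neg at hnot
  have hblock : i ≤ e l + rr l := by rw [hesucc l] at hnot; omega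
  -- inner induction within the block
  have key : ∀ t, 1 ≤ t → t ≤ rr l → gtWeight r a (e l + t) = 0 := by
    intro t
    induction t with
    | zero => intro h; omega
    | succ t ih =>
      intro _ hle
      rcases Nat.eq_zero_or_pos t with rfl | ht
      · exact hzero l hlltk
      · have hprev := ih ht (by omega)
        set s := e l + t with hsdef
        have helr : e l + rr l ≤ r := by
          rw [← hesucc l]; exact hemono (l+1) (by omega)
        have hs1 : 1 ≤ s := by omega
        have hsr : s + 1 ≤ r := by omega
        have hdvd := hmod (s+1) (by omega) (by omega)
        have hnn := GTAux.weight_nonneg r a hdec (s+1) (by omega) (by omega)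
        have hbound : gtWeight r a (s+1) ≤ ((rr l - t : ℕ) : ℤ) := by
          by_cases hk2 : l + 1 = k
          · have hre : r = e l + rr l := by rw [← hesucc l, hk2, hek]
            have := GTAux.boundA r a hdec hinterlace s hs1 hsr hprev
            have hb : r - s = rr l - t := by omega
            rwa [hb] at this
          · have hlt2 : l + 1 < k := by omega
            have hu : gtWeight r a (e (l+1) + 1) = 0 := hzero (l+1) hlt2
            set u := e (l+1) + 1 with hudef
            have hur : u ≤ r := by
              have h1 : e (l+1+1) ≤ r := hemono (l+1+1) (by omega)
              have h2 := hesucc (l+1)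
              have h3 := (hrr (l+1) hlt2).1
              omega
            have hsu : s + 1 ≤ u := by
              rw [hudef, hesucc l]; omega
            have := GTAux.boundB r a hdec hinterlace s u hs1 hsu hur hprev hu
            have hb : u - s - 1 = rr l - t := by
              rw [hudef, hesucc l]; omega
            rwa [hb] at this
        have hlt : gtWeight r a (s+1) < (n : ℤ) := by
          have h1 := (hrr l hlltk).2
          have : ((rr l - t : ℕ) : ℤ) < (n : ℤ) := by
            have : rr l - t < n := by omega
            exact_mod_cast this
          omega
        have : gtWeight r a (s+1) = 0 := by
          rcases eq_or_lt_of_le hnn with h | h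
          · omega
          · exfalso
            have := Int.le_of_dvd h hdvd
            omega
        have : e l + (t+1) = s + 1 := by omega
        rwa [‹e l + (t+1) = s + 1›]
  have : i = e l + (i - e l) := by omega
  rw [this]
  exact key (i - e l) (by omega) (by omega)
end

section
/- Let Y = Y₁ ⊕ Y₂ be a direct sum decomposition of the coweight lattice compatible with a decomposition W(M) = W(M₁) × W(M₂) of a Weyl group acting component-wise via the dot action (with ρ decomposing as ρ = ρ₁ + ρ₂ accordingly on the relevant subsystems). Suppose τ is a function on W(M) × (Y/L)² satisfying the simple-reflection support condition and cocycle relation, and suppose for each simple reflection σ_α ∈ W(M₁), τ(σ_α, (y₁,y₂), (y'₁,y'₂)) vanishes unless y₂ ≡ y'₂, and its value equals τ₁(σ_α, y₁, y'₁) depending only on the first component (and symmetrically for W(M₂)). Then for all w = (w₁,w₂) ∈ W(M) and y = (y₁,y₂), y' = (y'₁,y'₂): τ(w, y, y') = τ₁(w₁, y₁, y'₁) · τ₂(w₂, y₂, y'₂). -/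
/-- factorization of local coefficient matrices over a product Levi
`M = M₁ × M₂`. The Weyl group `W(M) = W(M₁) × W(M₂)` acts componentwise (via the dot
action) on `Y = Y₁ ⊕ Y₂`, `πᵢ : Yᵢ → Cᵢ` are the reductions modulo the sublattices
(`Cᵢ = Yᵢ/Lᵢ`), and `τ, τ₁, τ₂` are coefficient functions satisfying the identity
normalization, the simple-reflection support conditions, the cocycle relation for
length-additive products (length on `W(M₁) × W(M₂)` being the sum of the factor
lengths), and such that at simple reflections of one factor `τ` vanishes unless the
other component is unchanged, where it is given by the corresponding `τᵢ`. Then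
`τ((w₁,w₂), (y₁,y₂), (y'₁,y'₂)) = τ₁(w₁,y₁,y'₁) · τ₂(w₂,y₂,y'₂)` for all arguments. -/
theorem tau_factorization_product_levi
    {B₁ B₂ W₁ W₂ Y₁ Y₂ C₁ C₂ : Type*} [Group W₁] [Group W₂]
    [Fintype C₁] [Fintype C₂] [DecidableEq C₁] [DecidableEq C₂]
    {M₁ : CoxeterMatrix B₁} (cs₁ : CoxeterSystem M₁ W₁)
    {M₂ : CoxeterMatrix B₂} (cs₂ : CoxeterSystem M₂ W₂)
    [MulAction W₁ Y₁] [MulAction W₂ Y₂]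
    (π₁ : Y₁ → C₁) (hs₁ : Function.Surjective π₁)
    (π₂ : Y₂ → C₂) (hs₂ : Function.Surjective π₂)
    (τ : W₁ × W₂ → C₁ × C₂ → C₁ × C₂ → ℂ)
    (τ₁ : W₁ → C₁ → C₁ → ℂ) (τ₂ : W₂ → C₂ → C₂ → ℂ)
    (hid : ∀ c c' : C₁ × C₂, τ 1 c c' = if c' = c then 1 else 0)
    (hid₁ : ∀ c c' : C₁, τ₁ 1 c c' = if c' = c then 1 else 0)
    (hid₂ : ∀ c c' : C₂, τ₂ 1 c c' = if c' = c then 1 else 0)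
    (hsupp₁ : ∀ (i : B₁) (z z' : Y₁), τ₁ (cs₁.simple i) (π₁ z) (π₁ z') ≠ 0 →
      π₁ z' = π₁ z ∨ π₁ z' = π₁ (cs₁.simple i • z))
    (hsupp₂ : ∀ (i : B₂) (z z' : Y₂), τ₂ (cs₂.simple i) (π₂ z) (π₂ z') ≠ 0 →
      π₂ z' = π₂ z ∨ π₂ z' = π₂ (cs₂.simple i • z))
    (hcoc : ∀ p q : W₁ × W₂,
      cs₁.length (p.1 * q.1) + cs₂.length (p.2 * q.2)
        = (cs₁.length p.1 + cs₂.length p.2) + (cs₁.length q.1 + cs₂.length q.2) →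
      ∀ c c' : C₁ × C₂, τ (p * q) c c' = ∑ c'' : C₁ × C₂, τ p c c'' * τ q c'' c')
    (hcoc₁ : ∀ u v : W₁, cs₁.length (u * v) = cs₁.length u + cs₁.length v →
      ∀ c c' : C₁, τ₁ (u * v) c c' = ∑ c'' : C₁, τ₁ u c c'' * τ₁ v c'' c')
    (hcoc₂ : ∀ u v : W₂, cs₂.length (u * v) = cs₂.length u + cs₂.length v →
      ∀ c c' : C₂, τ₂ (u * v) c c' = ∑ c'' : C₂, τ₂ u c c'' * τ₂ v c'' c')
    (hfac₁ : ∀ (i : B₁) (c c' : C₁ × C₂),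
      τ (cs₁.simple i, 1) c c' = if c'.2 = c.2 then τ₁ (cs₁.simple i) c.1 c'.1 else 0)
    (hfac₂ : ∀ (i : B₂) (c c' : C₁ × C₂),
      τ (1, cs₂.simple i) c c' = if c'.1 = c.1 then τ₂ (cs₂.simple i) c.2 c'.2 else 0)
    (w : W₁ × W₂) (c c' : C₁ × C₂) :
    τ w c c' = τ₁ w.1 c.1 c'.1 * τ₂ w.2 c.2 c'.2 := by
  -- Step 1: factorization for elements of the form (w₁, 1)
  have key₁ : ∀ (w₁ : W₁) (c c' : C₁ × C₂),
      τ (w₁, 1) c c' = if c'.2 = c.2 then τ₁ w₁ c.1 c'.1 else 0 := by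
    suffices h : ∀ (n : ℕ) (w₁ : W₁), cs₁.length w₁ = n →
        ∀ c c' : C₁ × C₂, τ (w₁, 1) c c' = if c'.2 = c.2 then τ₁ w₁ c.1 c'.1 else 0 by
      intro w₁; exact h (cs₁.length w₁) w₁ rfl
    intro n
    induction n using Nat.strong_induction_on with
    | _ n IH' =>
    intro w₁ hn c c'
    have IH : ∀ v : W₁, cs₁.length v < cs₁.length w₁ →
        ∀ c c' : C₁ × C₂, τ (v, 1) c c' = if c'.2 = c.2 then τ₁ v c.1 c'.1 else 0 := by
      intro v hv; exact IH' (cs₁.length v) (hn ▸ hv) v rfl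
    rcases eq_or_ne w₁ 1 with rfl | hne
    · rw [show ((1, 1) : W₁ × W₂) = 1 from rfl, hid, hid₁]
      by_cases h1 : c'.1 = c.1 <;> by_cases h2 : c'.2 = c.2 <;> simp [Prod.ext_iff, h1, h2]
    · obtain ⟨i, hi⟩ := cs₁.exists_leftDescent_of_ne_one hne
      set v := cs₁.simple i * w₁ with hv
      have hlen : cs₁.length v + 1 = cs₁.length w₁ := cs₁.isLeftDescent_iff.mp hi
      have hw₁ : w₁ = cs₁.simple i * v := by
        rw [hv, CoxeterSystem.simple_mul_simple_cancel_left]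
      have hadd : cs₁.length (cs₁.simple i * v) = cs₁.length (cs₁.simple i) + cs₁.length v := by
        rw [← hw₁, cs₁.length_simple]; omega
      have hIH := IH v (by omega)
      have hcoc' := hcoc (cs₁.simple i, 1) (v, 1)
        (by simpa [cs₁.length_simple] using hadd) c c'
      rw [hw₁]
      have : ((cs₁.simple i, 1) : W₁ × W₂) * (v, 1) = (cs₁.simple i * v, 1) := by
        simp [Prod.ext_iff]
      rw [← this, hcoc']
      rw [hcoc₁ (cs₁.simple i) v hadd]
      rw [Fintype.sum_prod_type]
      simp only [hfac₁, hIH]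
      by_cases h2 : c'.2 = c.2
      · simp only [h2, if_pos rfl]
        rw [Finset.sum_comm]
        rw [Finset.sum_eq_single c.2]
        · simp
        · intro b _ hb
          apply Finset.sum_eq_zero; intro a _
          simp [hb]
        · simp
      · simp only [if_neg h2]
        apply Finset.sum_eq_zero; intro a _
        apply Finset.sum_eq_zero; intro b _
        by_cases hb : b = c.2
        · subst hb; simp [h2]
        · simp [hb]
  -- Step 2: factorization for elements of the form (1, w₂)
  have key₂ : ∀ (w₂ : W₂) (c c' : C₁ × C₂),
      τ (1, w₂) c c' = if c'.1 = c.1 then τ₂ w₂ c.2 c'.2 else 0 := by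
    suffices h : ∀ (n : ℕ) (w₂ : W₂), cs₂.length w₂ = n →
        ∀ c c' : C₁ × C₂, τ (1, w₂) c c' = if c'.1 = c.1 then τ₂ w₂ c.2 c'.2 else 0 by
      intro w₂; exact h (cs₂.length w₂) w₂ rfl
    intro n
    induction n using Nat.strong_induction_on with
    | _ n IH' =>
    intro w₂ hn c c'
    have IH : ∀ v : W₂, cs₂.length v < cs₂.length w₂ →
        ∀ c c' : C₁ × C₂, τ (1, v) c c' = if c'.1 = c.1 then τ₂ v c.2 c'.2 else 0 := by
      intro v hv; exact IH' (cs₂.length v) (hn ▸ hv) v rfl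
    rcases eq_or_ne w₂ 1 with rfl | hne
    · rw [show ((1, 1) : W₁ × W₂) = 1 from rfl, hid, hid₂]
      by_cases h1 : c'.1 = c.1 <;> by_cases h2 : c'.2 = c.2 <;> simp [Prod.ext_iff, h1, h2]
    · obtain ⟨i, hi⟩ := cs₂.exists_leftDescent_of_ne_one hne
      set v := cs₂.simple i * w₂ with hv
      have hlen : cs₂.length v + 1 = cs₂.length w₂ := cs₂.isLeftDescent_iff.mp hi
      have hw₂ : w₂ = cs₂.simple i * v := by
        rw [hv, CoxeterSystem.simple_mul_simple_cancel_left]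
      have hadd : cs₂.length (cs₂.simple i * v) = cs₂.length (cs₂.simple i) + cs₂.length v := by
        rw [← hw₂, cs₂.length_simple]; omega
      have hIH := IH v (by omega)
      have hcoc' := hcoc (1, cs₂.simple i) (1, v)
        (by simpa [cs₂.length_simple] using hadd) c c'
      rw [hw₂]
      have : ((1, cs₂.simple i) : W₁ × W₂) * (1, v) = (1, cs₂.simple i * v) := by
        simp [Prod.ext_iff]
      rw [← this, hcoc']
      rw [hcoc₂ (cs₂.simple i) v hadd]
      rw [Fintype.sum_prod_type]
      simp only [hfac₂, hIH]
      by_cases h1 : c'.1 = c.1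
      · simp only [h1, if_pos rfl]
        rw [Finset.sum_eq_single c.1]
        · simp
        · intro a _ ha
          apply Finset.sum_eq_zero; intro b _
          simp [ha]
        · simp
      · simp only [if_neg h1]
        apply Finset.sum_eq_zero; intro a _
        apply Finset.sum_eq_zero; intro b _
        by_cases ha : a = c.1
        · subst ha; simp [h1]
        · simp [ha]
  -- Step 3: combine
  obtain ⟨w₁, w₂⟩ := w
  have hsplit : ((w₁, w₂) : W₁ × W₂) = (w₁, 1) * (1, w₂) := by simp [Prod.ext_iff]
  rw [hsplit, hcoc (w₁, 1) (1, w₂) (by simp) c c', Fintype.sum_prod_type]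
  simp only [key₁, key₂]
  rw [Finset.sum_comm, Finset.sum_eq_single c.2]
  · rw [Finset.sum_eq_single c'.1]
    · simp
    · intro a _ ha; simp [Ne.symm ha]
    · simp
  · intro b _ hb
    apply Finset.sum_eq_zero; intro a _
    simp [hb]
  · simp
end
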